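/- For 0 < α < 1, the integral ∫₀¹ x^{α-2} ( -(1-x)^{-α} + (1+x)^{-α} ) dx equals 2^{1-α}/(α-1). -/

import Mathlib

/-!
With `G t = t^(α-1) ((1-t)^(1-α) - (1+t)^(1-α))` one has `G' = (1-α) f`, where `f` is the
integrand. The bracket vanishes to first order at `0`, so `G t = O(t^α) → 0` as `t → 0⁺`, while
`G 1 = -2^(1-α)`. Since `f ≤ 0` on `(0, 1)`, `G` is antitone, so `f` is automatically integrable
and the improper fundamental theorem of calculus gives `(1-α) ∫₀¹ f = -2^(1-α)`.
-/

open Set Filter Topology Real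

theorem intervalIntegral.integral_eq_sub_of_hasDerivAt_of_tendsto_of_nonpos {f f' : ℝ → ℝ}
    {a b fa fb : ℝ} (hab : a < b) (hderiv : ∀ x ∈ Ioo a b, HasDerivAt f (f' x) x)
    (hf' : ∀ x ∈ Ioo a b, f' x ≤ 0) (ha : Tendsto f (𝓝[>] a) (𝓝 fa))
    (hb : Tendsto f (𝓝[<] b) (𝓝 fb)) :
    ∫ y in a..b, f' y = fb - fa := by
  refine intervalIntegral.integral_eq_sub_of_hasDerivAt_of_tendsto hab hderiv ?_ ha hb
  set F : ℝ → ℝ := Function.update (Function.update f a fa) b fb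
  have hF : ∀ x ∈ Ioo a b, HasDerivAt (-F) (-f' x) x := fun x hx ↦ by
    refine (hderiv x hx).neg.congr_of_eventuallyEq ?_
    filter_upwards [Ioo_mem_nhds hx.1 hx.2] with y hy
    simp [F, hy.2.ne, hy.1.ne']
  have hcont : ContinuousOn F (Icc a b) := by
    rw [continuousOn_update_iff, continuousOn_update_iff, Icc_sdiff_right, Ico_sdiff_left]
    refine ⟨⟨fun z hz ↦ (hderiv z hz).continuousAt.continuousWithinAt, fun _ ↦ ?_⟩, fun _ ↦ ?_⟩
    · exact ha.mono_left (nhdsWithin_mono _ Ioo_subset_Ioi_self)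
    · refine (hb.congr' ?_).mono_left (nhdsWithin_mono _ Ico_subset_Iio_self)
      filter_upwards [Ioo_mem_nhdsLT hab] with z hz using (Function.update_of_ne hz.1.ne' _ _).symm
  have := intervalIntegral.intervalIntegrable_deriv_of_nonneg (g := -F) (g' := -f')
    (by rw [uIcc_of_le hab.le]; exact hcont.neg)
    (by simpa [hab.le] using hF) (by simpa [hab.le] using fun x hx ↦ hf' x hx)
  simpa only [neg_neg] using this.neg

theorem tendsto_rpow_sub_one_mul_nhdsGT_zero {g : ℝ → ℝ} {g' α : ℝ} (hg : HasDerivAt g g' 0)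
    (hg0 : g 0 = 0) (hα : 0 < α) :
    Tendsto (fun t ↦ t ^ (α - 1) * g t) (𝓝[>] 0) (𝓝 0) := by
  have hpow : Tendsto (fun t : ℝ ↦ t ^ α) (𝓝[>] 0) (𝓝 0) := by
    simpa [zero_rpow hα.ne'] using
      (continuousAt_rpow_const 0 α (Or.inr hα.le)).tendsto.mono_left nhdsWithin_le_nhds
  have := hpow.mul hg.tendsto_slope_zero_right
  rw [zero_mul] at this
  refine this.congr' ?_
  filter_upwards [self_mem_nhdsWithin] with t (ht : 0 < t)
  rw [rpow_sub_one ht.ne', zero_add, hg0, sub_zero, smul_eq_mul]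
  ring

noncomputable def rpowPrimitive (α t : ℝ) : ℝ :=
  t ^ (α - 1) * ((1 - t) ^ (1 - α) - (1 + t) ^ (1 - α))

theorem hasDerivAt_rpowPrimitive {α x : ℝ} (hx : x ∈ Ioo 0 1) :
    HasDerivAt (rpowPrimitive α)
      ((1 - α) * (x ^ (α - 2) * (-(1 - x) ^ (-α) + (1 + x) ^ (-α)))) x := by
  obtain ⟨hx0, hx1⟩ := hx
  have hsub : 1 - x ≠ 0 := by linarith
  have hadd : 1 + x ≠ 0 := by linarith
  have d := ((hasDerivAt_id x).rpow_const (p := α - 1) (Or.inl hx0.ne')).mul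
    ((((hasDerivAt_id x).const_sub 1).rpow_const (p := 1 - α) (Or.inl hsub)).sub
      (((hasDerivAt_id x).const_add 1).rpow_const (p := 1 - α) (Or.inl hadd)))
  have hpow : x ^ (α - 1) = x ^ (α - 2) * x := by rw [← rpow_add_one hx0.ne']; ring_nf
  have hsub' : (1 - x) ^ (1 - α) = (1 - x) ^ (-α) * (1 - x) := by
    rw [← rpow_add_one hsub]; ring_nf
  have hadd' : (1 + x) ^ (1 - α) = (1 + x) ^ (-α) * (1 + x) := by
    rw [← rpow_add_one hadd]; ring_nf
  refine d.congr_deriv ?_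
  simp only [id, Pi.sub_apply, show α - 1 - 1 = α - 2 by ring, show 1 - α - 1 = -α by ring]
  rw [hpow, hsub', hadd']
  ring

theorem tendsto_rpowPrimitive_zero {α : ℝ} (hα : 0 < α) :
    Tendsto (rpowPrimitive α) (𝓝[>] 0) (𝓝 0) :=
  tendsto_rpow_sub_one_mul_nhdsGT_zero
    ((((hasDerivAt_id 0).const_sub 1).rpow_const (p := 1 - α) (by simp)).sub
      (((hasDerivAt_id 0).const_add 1).rpow_const (p := 1 - α) (by simp))) (by simp) hα

theorem tendsto_rpowPrimitive_one {α : ℝ} (hα : α < 1) :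
    Tendsto (rpowPrimitive α) (𝓝[<] 1) (𝓝 (-2 ^ (1 - α))) := by
  have hcont : ContinuousAt (rpowPrimitive α) 1 := by
    unfold rpowPrimitive
    fun_prop (disch := first | (right; linarith) | (left; norm_num))
  have h1 : rpowPrimitive α 1 = -2 ^ (1 - α) := by
    norm_num [rpowPrimitive, zero_rpow (sub_ne_zero.2 hα.ne')]
  simpa [h1] using hcont.tendsto.mono_left nhdsWithin_le_nhds

theorem integrand_nonpos {α x : ℝ} (hα : 0 ≤ α) (hx : x ∈ Ioo 0 1) :
    x ^ (α - 2) * (-(1 - x) ^ (-α) + (1 + x) ^ (-α)) ≤ 0 := by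
  obtain ⟨hx0, hx1⟩ := hx
  have : (1 + x) ^ (-α) ≤ (1 - x) ^ (-α) :=
    rpow_le_rpow_of_nonpos (by linarith) (by linarith) (neg_nonpos.2 hα)
  exact mul_nonpos_of_nonneg_of_nonpos (rpow_nonneg hx0.le _) (by linarith)

/-- For `0 < α < 1`, `∫₀¹ x^{α-2}(-(1-x)^{-α} + (1+x)^{-α}) dx = 2^{1-α}/(α-1)`. -/
theorem stmt_2 (α : ℝ) (hα0 : 0 < α) (hα1 : α < 1) :
    ∫ x in (0:ℝ)..1, x ^ (α - 2) * (-(1 - x) ^ (-α) + (1 + x) ^ (-α)) =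
      2 ^ (1 - α) / (α - 1) := by
  have h := intervalIntegral.integral_eq_sub_of_hasDerivAt_of_tendsto_of_nonpos one_pos
    (fun x hx ↦ hasDerivAt_rpowPrimitive hx)
    (fun x hx ↦ mul_nonpos_of_nonneg_of_nonpos (by linarith) (integrand_nonpos hα0.le hx))
    (tendsto_rpowPrimitive_zero hα0) (tendsto_rpowPrimitive_one hα1)
  rw [intervalIntegral.integral_const_mul] at h
  have hα : α - 1 ≠ 0 := sub_ne_zero.2 hα1.ne
  rw [eq_div_iff hα]
  linarith
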